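/- Let 𝓕 be a nonempty finite set of graphs with γ = max_{F∈𝓕}|V(F)|. There exists a constant C ≥ 1 depending only on 𝓕 such that for every graph G and all integers k ≥ 0 and τ ≥ 2, there exist an integer r with 0 ≤ r ≤ τ^{C·(k/τ + 1)} and subsets S_1, …, S_r ⊆ V(G) satisfying: (i) for every 𝓕-hitting set S ⊆ V(G) of G with |S| ≤ k, there exists i ∈ [r] with S_i ⊆ S; (ii) ω(G − S_i) ≤ τ + γ for all i ∈ [r]; and (iii) |S_i| ≤ k for all i ∈ [r], where ω(H) denotes the maximum number of vertices of a clique in H. -/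

import Mathlib

/-- An `F`-copy in `G`, encoded by the injective map sending the vertices of the
pattern graph `F` into `G` (the inverse of the isomorphism `π`). -/
def IsCopy {W V : Type} (F : SimpleGraph W) (G : SimpleGraph V) (φ : W → V) : Prop :=
  Function.Injective φ ∧ ∀ a b : W, F.Adj a b → G.Adj (φ a) (φ b)

/-- `S` is an `𝓕`-hitting set of `G`: every copy in `G` of a member of the family meets `S`
(equivalently, `G - S` contains no subgraph isomorphic to a member of the family). -/
def IsHittingSet {V ι : Type} {W : ι → Type} (G : SimpleGraph V)
    (F : ∀ i, SimpleGraph (W i)) (S : Set V) : Prop :=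
  ∀ (i : ι) (φ : W i → V), IsCopy (F i) G φ → ∃ a, φ a ∈ S

/-- An indexed family of sets forms a sunflower with core `X`. -/
def IsSunflower {V ι : Type} (s : ι → Set V) (X : Set V) : Prop :=
  (∀ i, X ⊆ s i) ∧ Pairwise fun i j => Disjoint (s i \ X) (s j \ X)

/-- `(X, F, f)` is an `(𝓕,δ)`-heavy core in `G`, where `γ = max_{F ∈ 𝓕} |V(F)|`. -/
def IsHeavyCore {V W : Type} (γ δ : ℕ) (G : SimpleGraph V) (F : SimpleGraph W)
    (X : Set V) (f : ↥X → W) : Prop :=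
  Function.Injective f ∧
  ∃ φ : Fin (γ ^ X.ncard * δ) → W → V,
    (∀ j, IsCopy F G (φ j)) ∧
    (∀ j (x : ↥X), φ j (f x) = (x : V)) ∧
    IsSunflower (fun j => Set.range (φ j)) X

/-- `(X, F, f) ≺ (Y, F, g)` : `X ⊊ Y` and `f = g|_X`. -/
def HCPrec {V W : Type} (X : Set V) (f : ↥X → W) (Y : Set V) (g : ↥Y → W) : Prop :=
  ∃ h : X ⊆ Y, X ≠ Y ∧ ∀ (x : V) (hx : x ∈ X), f ⟨x, hx⟩ = g ⟨x, h hx⟩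

/-- The heavy core `(X, F, f)` is `U`-minimal. -/
def UMinimalHC {V W : Type} (γ δ : ℕ) (G : SimpleGraph V) (F : SimpleGraph W)
    (U X : Set V) (f : ↥X → W) : Prop :=
  ¬ X ⊆ U ∧ ∀ (Y : Set V) (g : ↥Y → W),
    IsHeavyCore γ δ G F Y g → HCPrec Y g X f → Y ⊆ U

/-- The `F`-copy `φ` is `U`-redundant. -/
def CopyURedundant {V W : Type} (G : SimpleGraph V) (F : SimpleGraph W)
    (U : Set V) (φ : W → V) : Prop :=
  ∃ ψ : W → V, IsCopy F G ψ ∧ ¬ Set.range ψ ⊆ U ∧ Set.range ψ \ U ⊂ Set.range φ \ U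

/-- The heavy core `(X, F, f)` is `U`-redundant: every `F`-copy `(H, π)` in `G` with
`(X,F,f) ⪯ (V(H),F,π)` is `U`-redundant. -/
def HCURedundant {V W : Type} (G : SimpleGraph V) (F : SimpleGraph W)
    (U X : Set V) (f : ↥X → W) : Prop :=
  ∀ φ : W → V, IsCopy F G φ → (∀ x : ↥X, φ (f x) = (x : V)) → CopyURedundant G F U φ

/-- The set of vertices weakly `r`-reachable from `v` under the ordering `σ`. -/
def WR {V : Type} (G : SimpleGraph V) (σ : V ↪ ℕ) (r : ℕ) (v : V) : Set V :=
  {u | ∃ p : G.Walk v u, p.IsPath ∧ p.length ≤ r ∧ ∀ w ∈ p.support, σ w ≤ σ u}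

/-- The weak `r`-coloring number of `G` under the ordering `σ`. -/
noncomputable def wcolOn {V : Type} [Fintype V] (G : SimpleGraph V) (σ : V ↪ ℕ) (r : ℕ) : ℕ :=
  Finset.univ.sup fun v => (WR G σ r v).ncard

/-- The weak `r`-coloring number of `G`. -/
noncomputable def wcol {V : Type} [Fintype V] (G : SimpleGraph V) (r : ℕ) : ℕ :=
  sInf (Set.range fun σ : V ↪ ℕ => wcolOn G σ r)

/-- The clique number `ω(G)`. -/
noncomputable def omegaClique {V : Type} (G : SimpleGraph V) : ℕ :=
  sSup {n | ∃ s : Finset V, G.IsNClique n s}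

/-- `G` admits balanced `(η, μ, ρ)`-separators. -/
def HasBalancedSeparators {V : Type} [Fintype V] (G : SimpleGraph V) (η μ ρ : ℝ) : Prop :=
  ∀ A : Set V, ∃ S : Set V, S ⊆ A ∧
    (S.ncard : ℝ) ≤ η * (omegaClique (G.induce A) : ℝ) ^ μ * (A.ncard : ℝ) ^ ρ ∧
    ∀ C : (G.induce (A \ S)).ConnectedComponent, (C.supp.ncard : ℝ) ≤ (A.ncard : ℝ) / 2

/-- `(T, β)` is a tree decomposition of `G`. -/
def IsTreeDecomp {V : Type} {n : ℕ} (G : SimpleGraph V) (T : SimpleGraph (Fin n))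
    (β : Fin n → Set V) : Prop :=
  T.IsTree ∧ (∀ v : V, ∃ t, v ∈ β t) ∧
  (∀ u v : V, G.Adj u v → ∃ t, u ∈ β t ∧ v ∈ β t) ∧
  (∀ v : V, (T.induce {t | v ∈ β t}).Connected)

/-- The treewidth of `G`. -/
noncomputable def treewidth {V : Type} (G : SimpleGraph V) : ℕ :=
  sInf {w | ∃ (n : ℕ) (T : SimpleGraph (Fin n)) (β : Fin n → Set V),
    IsTreeDecomp G T β ∧ ∀ t, (β t).ncard ≤ w + 1}

/-- The Gaifman graph of a collection of sets. -/
def gaifman {V : Type} (𝓧 : Set (Set V)) : SimpleGraph ↥(⋃₀ 𝓧) :=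
  SimpleGraph.fromRel fun u v => ∃ X ∈ 𝓧, (u : V) ∈ X ∧ (v : V) ∈ X

/-- Equality of standard triples `(X, F_i, f)` and `(X', F_{i'}, f')`. -/
def TripleEq {V ι : Type} {W : ι → Type}
    (i : ι) (X : Set V) (f : ↥X → W i) (i' : ι) (X' : Set V) (f' : ↥X' → W i') : Prop :=
  ∃ hi : i = i', X = X' ∧ ∀ (x : V) (hx : x ∈ X) (hx' : x ∈ X'),
    cast (congrArg W hi) (f ⟨x, hx⟩) = f' ⟨x, hx'⟩

/-- `G⁺` : add one new vertex adjacent to all vertices of `G`. -/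
def addUniversal {V : Type} (G : SimpleGraph V) : SimpleGraph (Option V) :=
  SimpleGraph.fromRel fun u v =>
    (∃ a b, u = some a ∧ v = some b ∧ G.Adj a b) ∨ u = none

/-- `𝓥_𝓕(G)` : the vertex sets of subgraphs of `G` isomorphic to a member of the family. -/
def VF {V ι : Type} {W : ι → Type} (G : SimpleGraph V) (F : ∀ i, SimpleGraph (W i)) :
    Set (Set V) :=
  {A | ∃ (i : ι) (φ : W i → V), IsCopy (F i) G φ ∧ A = Set.range φ}

section Branch
variable {V : Type} [DecidableEq V] (G : SimpleGraph V) (τ γ k : ℕ)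

open scoped Classical in
/-- The branching process. -/
noncomputable def cliBranch : ℕ → Finset V → Finset (Finset V)
  | 0, _ => ∅
  | n+1, U =>
    if k < U.card then ∅
    else if h : ∃ K : Finset V, Disjoint K U ∧ G.IsNClique (τ + γ + 1) K then
      (h.choose.powerset.filter fun D => D.card < γ).biUnion
        fun D => cliBranch n (U ∪ (h.choose \ D))
    else {U}

lemma cliBranch_sound : ∀ (n : ℕ) (U U' : Finset V), U' ∈ cliBranch G τ γ k n U →
    U'.card ≤ k ∧ ¬ (∃ K : Finset V, Disjoint K U' ∧ G.IsNClique (τ + γ + 1) K) := by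
  intro n
  induction n with
  | zero => intro U U' h; simp [cliBranch] at h
  | succ n ih =>
    intro U U' h
    rw [cliBranch] at h
    split_ifs at h with h1 h2
    · simp at h
    · simp only [Finset.mem_biUnion] at h
      obtain ⟨D, _, hU'⟩ := h
      exact ih _ _ hU'
    · simp at h
      subst h
      exact ⟨le_of_not_gt h1, h2⟩

lemma cliBranch_card (hτB : 2 ≤ τ + γ + 1) :
    ∀ (m n : ℕ) (U : Finset V), k + 1 ≤ U.card + m * (τ + 2) →
    (cliBranch G τ γ k n U).card ≤ ((τ + γ + 1) ^ γ) ^ m := by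
  -- branching factor bound: #subsets of K of card < γ ≤ (τ+γ+1)^γ
  have hB : ∀ K : Finset V, K.card = τ + γ + 1 →
      ((K.powerset.filter fun D => D.card < γ)).card ≤ (τ + γ + 1) ^ γ := by
    intro K hK
    have hsub : (K.powerset.filter fun D => D.card < γ) ⊆
        (Finset.range γ).biUnion fun j => K.powersetCard j := by
      intro D hD
      simp only [Finset.mem_filter, Finset.mem_powerset] at hD
      simp only [Finset.mem_biUnion, Finset.mem_range, Finset.mem_powersetCard]
      exact ⟨D.card, hD.2, hD.1, rfl⟩
    calc ((K.powerset.filter fun D => D.card < γ)).card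
        ≤ ((Finset.range γ).biUnion fun j => K.powersetCard j).card := Finset.card_le_card hsub
      _ ≤ ∑ j ∈ Finset.range γ, (K.powersetCard j).card := Finset.card_biUnion_le
      _ ≤ ∑ j ∈ Finset.range γ, (τ + γ + 1) ^ j := by
          apply Finset.sum_le_sum
          intro j _
          rw [Finset.card_powersetCard, hK]
          exact Nat.choose_le_pow _ _
      _ ≤ (τ + γ + 1) ^ γ := by
          have hgeom : ∀ (x n : ℕ), 2 ≤ x → ∑ j ∈ Finset.range n, x ^ j ≤ x ^ n := by
            intro x n hx
            induction n with
            | zero => simp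
            | succ n ihn =>
              rw [Finset.sum_range_succ, pow_succ]
              have h1 : (1:ℕ) ≤ x ^ n := Nat.one_le_pow _ _ (by omega)
              nlinarith
          exact hgeom _ _ hτB
  intro m
  induction m with
  | zero =>
    intro n U hU
    simp only [Nat.zero_mul, Nat.add_zero] at hU
    cases n with
    | zero => simp [cliBranch]
    | succ n =>
      rw [cliBranch]
      rw [if_pos (by omega)]
      simp
  | succ m ihm =>
    intro n U hU
    cases n with
    | zero => simp [cliBranch]
    | succ n =>
      rw [cliBranch]
      split_ifs with h1 h2
      · simp
      · obtain ⟨hdisj, hclique⟩ := h2.choose_spec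
        calc ((h2.choose.powerset.filter fun D => D.card < γ).biUnion
              fun D => cliBranch G τ γ k n (U ∪ (h2.choose \ D))).card
            ≤ ∑ D ∈ (h2.choose.powerset.filter fun D => D.card < γ),
                (cliBranch G τ γ k n (U ∪ (h2.choose \ D))).card := Finset.card_biUnion_le
          _ ≤ ∑ _D ∈ (h2.choose.powerset.filter fun D => D.card < γ),
                ((τ + γ + 1) ^ γ) ^ m := by
              apply Finset.sum_le_sum
              intro D hD
              simp only [Finset.mem_filter, Finset.mem_powerset] at hD
              apply ihm
              have hDK : D ⊆ h2.choose := hD.1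
              have hdisj2 : Disjoint U (h2.choose \ D) :=
                (hdisj.mono_left Finset.sdiff_subset).symm
              have hcard : (U ∪ (h2.choose \ D)).card = U.card + (h2.choose \ D).card :=
                Finset.card_union_of_disjoint hdisj2
              have hsd : (h2.choose \ D).card = (τ + γ + 1) - D.card := by
                rw [Finset.card_sdiff_of_subset hDK, hclique.card_eq]
              have hge : τ + 2 ≤ (h2.choose \ D).card := by
                have := hD.2; omega
              calc k + 1 ≤ U.card + (m + 1) * (τ + 2) := hU
                _ = U.card + (τ + 2) + m * (τ + 2) := by ring
                _ ≤ U.card + (h2.choose \ D).card + m * (τ + 2) :=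
                    Nat.add_le_add_right (Nat.add_le_add_left hge _) _
                _ = (U ∪ (h2.choose \ D)).card + m * (τ + 2) := by rw [hcard]
          _ ≤ ((τ + γ + 1) ^ γ) * ((τ + γ + 1) ^ γ) ^ m := by
              rw [Finset.sum_const, smul_eq_mul]
              exact Nat.mul_le_mul_right _ (hB _ hclique.card_eq)
          _ = ((τ + γ + 1) ^ γ) ^ (m + 1) := (pow_succ' _ _).symm
      · simp only [Finset.card_singleton]
        exact Nat.one_le_pow _ _ (by positivity)
end Branch

lemma hit_clique {ι : Type} [Fintype ι] [Nonempty ι] {W : ι → Type} [∀ i, Fintype (W i)]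
    (F : ∀ i, SimpleGraph (W i)) {V : Type} (G : SimpleGraph V) {S : Set V}
    (hS : IsHittingSet G F S) {K T : Finset V} (hK : G.IsClique ↑K) (hTK : T ⊆ K)
    (hTS : ∀ x ∈ T, x ∉ S)
    (hcard : (Finset.univ.sup fun i => Fintype.card (W i)) ≤ T.card) : False := by
  obtain ⟨i₀⟩ := ‹Nonempty ι›
  have hle : Fintype.card (W i₀) ≤ Fintype.card {x // x ∈ T} := by
    rw [Fintype.card_coe]
    exact le_trans (Finset.le_sup (f := fun i => Fintype.card (W i)) (Finset.mem_univ i₀)) hcard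
  obtain ⟨e⟩ := Function.Embedding.nonempty_of_card_le hle
  set φ : W i₀ → V := fun a => ((e a : {x // x ∈ T}) : V) with hφ
  have hinj : Function.Injective φ := fun a b hab => e.injective (Subtype.ext hab)
  have hcopy : IsCopy (F i₀) G φ := by
    refine ⟨hinj, fun a b hab => ?_⟩
    apply hK (Finset.mem_coe.mpr (hTK (e a).2)) (Finset.mem_coe.mpr (hTK (e b).2))
    exact fun h => hab.ne (e.injective (Subtype.ext h))
  obtain ⟨a, ha⟩ := hS i₀ φ hcopy
  exact hTS _ (e a).2 ha

lemma cliBranch_complete {ι : Type} [Fintype ι] [Nonempty ι] {W : ι → Type}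
    [∀ i, Fintype (W i)] (F : ∀ i, SimpleGraph (W i)) {V : Type} [DecidableEq V]
    (G : SimpleGraph V) (τ γ k : ℕ)
    (hγ : γ = Finset.univ.sup fun i => Fintype.card (W i))
    {S : Set V} (hS : IsHittingSet G F S) (SF : Finset V) (hSF : ↑SF = S)
    (hk : SF.card ≤ k) :
    ∀ (n : ℕ) (U : Finset V), U ⊆ SF → k + 1 ≤ U.card + n →
      ∃ U' ∈ cliBranch G τ γ k n U, U' ⊆ SF := by
  intro n
  induction n with
  | zero => intro U hU hn; have := Finset.card_le_card hU; omega
  | succ n ih =>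
    intro U hU hn
    rw [cliBranch]
    have hUk : ¬ k < U.card := by
      have h1 := Finset.card_le_card hU; omega
    rw [if_neg hUk]
    split_ifs with h2
    · obtain ⟨hdisj, hclique⟩ := h2.choose_spec
      set K := h2.choose with hKdef
      set D : Finset V := K.filter (fun x => x ∉ SF) with hDdef
      have hDK : D ⊆ K := Finset.filter_subset _ _
      have hDγ : D.card < γ := by
        by_contra hcon
        push_neg at hcon
        refine hit_clique F G hS hclique.isClique hDK ?_ (hγ ▸ hcon)
        intro x hx hxS
        rw [hDdef, Finset.mem_filter] at hx
        exact hx.2 (by rw [← hSF] at hxS; exact_mod_cast hxS)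
      have hmem : D ∈ K.powerset.filter fun D => D.card < γ := by
        simp only [Finset.mem_filter, Finset.mem_powerset]
        exact ⟨hDK, hDγ⟩
      have hsub : K \ D ⊆ SF := by
        intro x hx
        rw [Finset.mem_sdiff, hDdef, Finset.mem_filter] at hx
        by_contra hcon
        exact hx.2 ⟨hx.1, hcon⟩
      have hUU : U ∪ (K \ D) ⊆ SF := Finset.union_subset hU hsub
      have hne : 0 < (K \ D).card := by
        rw [Finset.card_sdiff_of_subset hDK, hclique.card_eq]; omega
      have hcardU : U.card + 1 ≤ (U ∪ (K \ D)).card := by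
        rw [Finset.card_union_of_disjoint ((hdisj.mono_left Finset.sdiff_subset).symm)]
        omega
      obtain ⟨U', hU', hU'S⟩ := ih (U ∪ (K \ D)) hUU (by omega)
      exact ⟨U', Finset.mem_biUnion.mpr ⟨D, hmem, hU'⟩, hU'S⟩
    · exact ⟨U, Finset.mem_singleton_self U, hU⟩

lemma omega_le_of_no_clique {V : Type} (G : SimpleGraph V) (A : Set V) (m : ℕ)
    (h : ∀ K : Finset V, ↑K ⊆ A → ¬ G.IsNClique (m + 1) K) :
    omegaClique (G.induce A) ≤ m := by
  classical
  apply csSup_le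
  · exact ⟨0, ∅, by simp⟩
  · rintro n ⟨s, hs⟩
    by_contra hcon
    push_neg at hcon
    obtain ⟨t, hts, htc⟩ := Finset.exists_subset_card_eq
      (show m + 1 ≤ s.card by rw [hs.card_eq]; omega)
    set K : Finset V := t.image Subtype.val with hKdef
    have hKA : ↑K ⊆ A := by
      intro x hx
      rw [hKdef] at hx
      simp only [Finset.coe_image, Set.mem_image, Finset.mem_coe] at hx
      obtain ⟨y, _, rfl⟩ := hx
      exact y.2
    apply h K hKA
    constructor
    · intro x hx y hy hxy
      rw [hKdef] at hx hy
      simp only [Finset.coe_image, Set.mem_image, Finset.mem_coe] at hx hy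
      obtain ⟨a, ha, rfl⟩ := hx
      obtain ⟨b, hb, rfl⟩ := hy
      have hab : a ≠ b := fun hh => hxy (by rw [hh])
      exact hs.isClique (hts ha) (hts hb) hab
    · rw [hKdef, Finset.card_image_of_injective _ Subtype.val_injective, htc]

/-- clique-branching lemma: there is a constant `C ≥ 1` depending only on
`𝓕` such that for every graph `G` and integers `k ≥ 0`, `τ ≥ 2` there are
`r ≤ τ^(C·(k/τ + 1))` subsets `S₁,…,S_r ⊆ V(G)` with: (i) every `𝓕`-hitting set `S` of `G`
with `|S| ≤ k` contains some `Sᵢ`; (ii) `ω(G − Sᵢ) ≤ τ + γ`; (iii) `|Sᵢ| ≤ k`. -/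
theorem stmt_19 {ι : Type} [Fintype ι] [Nonempty ι] {W : ι → Type} [∀ i, Fintype (W i)]
    (F : ∀ i, SimpleGraph (W i)) :
    ∃ C : ℝ, 1 ≤ C ∧
      ∀ (V : Type) [Fintype V] (G : SimpleGraph V) (k τ : ℕ), 2 ≤ τ →
      ∃ (r : ℕ) (Ss : Fin r → Set V),
        (r : ℝ) ≤ (τ : ℝ) ^ (C * ((k : ℝ) / (τ : ℝ) + 1)) ∧
        (∀ S : Set V, IsHittingSet G F S → S.ncard ≤ k → ∃ i, Ss i ⊆ S) ∧
        (∀ i, omegaClique (G.induce (Ss i)ᶜ) ≤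
          τ + Finset.univ.sup fun i' => Fintype.card (W i')) ∧
        (∀ i, (Ss i).ncard ≤ k) := by
  classical
  set γ : ℕ := Finset.univ.sup fun i' => Fintype.card (W i') with hγ
  have hC0 : (0 : ℝ) ≤ ((γ : ℝ) + 2) * (γ : ℝ) := by positivity
  refine ⟨((γ : ℝ) + 2) * (γ : ℝ) + 1, by linarith, ?_⟩
  intro V _ G k τ hτ
  set 𝓑 : Finset (Finset V) := cliBranch G τ γ k (k + 1) (∅ : Finset V) with hBdef
  set Ss : Fin 𝓑.card → Set V := fun i => ((𝓑.equivFin.symm i : Finset V) : Set V) with hSs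
  refine ⟨𝓑.card, Ss, ?_, ?_, ?_, ?_⟩
  · -- cardinality bound
    set q : ℕ := k / (τ + 2) with hq
    have hmk : k + 1 ≤ Finset.card (∅ : Finset V) + (q + 1) * (τ + 2) := by
      have h1 : (τ + 2) * (k / (τ + 2)) + k % (τ + 2) = k := Nat.div_add_mod k (τ + 2)
      have h2 : k % (τ + 2) < τ + 2 := Nat.mod_lt _ (by omega)
      have h3 : (q + 1) * (τ + 2) = (τ + 2) * (k / (τ + 2)) + (τ + 2) := by rw [hq]; ring
      simp only [Finset.card_empty]
      omega
    have hr1 : 𝓑.card ≤ ((τ + γ + 1) ^ γ) ^ (q + 1) :=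
      cliBranch_card G τ γ k (by omega) (q + 1) (k + 1) ∅ hmk
    have h2 : τ + γ + 1 ≤ τ ^ (γ + 2) := by
      calc τ + γ + 1 ≤ τ * (γ + 2) := by nlinarith
        _ ≤ τ * 2 ^ (γ + 1) := Nat.mul_le_mul_left _ (by have := @Nat.lt_two_pow_self (γ + 1); omega)
        _ ≤ τ * τ ^ (γ + 1) := Nat.mul_le_mul_left _ (Nat.pow_le_pow_left hτ _)
        _ = τ ^ (γ + 2) := by ring
    have hr2 : 𝓑.card ≤ τ ^ ((γ + 2) * γ * (q + 1)) := by
      calc 𝓑.card ≤ ((τ + γ + 1) ^ γ) ^ (q + 1) := hr1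
        _ ≤ ((τ ^ (γ + 2)) ^ γ) ^ (q + 1) :=
            Nat.pow_le_pow_left (Nat.pow_le_pow_left h2 _) _
        _ = τ ^ ((γ + 2) * γ * (q + 1)) := by rw [← pow_mul, ← pow_mul, mul_assoc]
    have hτR : (1 : ℝ) ≤ (τ : ℝ) := by exact_mod_cast (by omega : 1 ≤ τ)
    have hexp : (((γ + 2) * γ * (q + 1) : ℕ) : ℝ) ≤
        (((γ : ℝ) + 2) * (γ : ℝ) + 1) * ((k : ℝ) / (τ : ℝ) + 1) := by
      have hq1 : ((q : ℝ)) ≤ (k : ℝ) / (τ : ℝ) := by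
        calc ((q : ℝ)) ≤ (k : ℝ) / ((τ : ℝ) + 2) := by
              rw [hq]; exact_mod_cast Nat.cast_div_le (α := ℝ)
          _ ≤ (k : ℝ) / (τ : ℝ) := by
              have hτ0 : (0 : ℝ) < (τ : ℝ) := by exact_mod_cast (by omega : 0 < τ)
              have hk0' : (0 : ℝ) ≤ (k : ℝ) := Nat.cast_nonneg k
              gcongr
              linarith
      have hk0 : (0 : ℝ) ≤ (k : ℝ) / (τ : ℝ) := by positivity
      push_cast
      nlinarith [hq1, hk0, sq_nonneg ((γ : ℝ))]
    calc ((𝓑.card : ℕ) : ℝ) ≤ ((τ ^ ((γ + 2) * γ * (q + 1)) : ℕ) : ℝ) := by exact_mod_cast hr2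
      _ = (τ : ℝ) ^ ((((γ + 2) * γ * (q + 1) : ℕ)) : ℝ) := by
          rw [Real.rpow_natCast]; push_cast; ring
      _ ≤ (τ : ℝ) ^ ((((γ : ℝ) + 2) * (γ : ℝ) + 1) * ((k : ℝ) / (τ : ℝ) + 1)) :=
          Real.rpow_le_rpow_of_exponent_le hτR hexp
  · -- completeness
    intro S hSh hScard
    set SF : Finset V := (Set.toFinite S).toFinset with hSFdef
    have hSF : ↑SF = S := Set.Finite.coe_toFinset _
    have hkS : SF.card ≤ k := by
      rw [← Set.ncard_eq_toFinset_card S (Set.toFinite S)] at *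
      exact hScard
    obtain ⟨U', hU', hsub⟩ := cliBranch_complete F G τ γ k hγ hSh SF hSF hkS (k + 1) ∅
      (Finset.empty_subset _) (by simp)
    refine ⟨𝓑.equivFin ⟨U', hU'⟩, ?_⟩
    rw [hSs]
    simp only [Equiv.symm_apply_apply]
    rw [← hSF]
    exact_mod_cast hsub
  · -- clique number bound
    intro i
    obtain ⟨hcard, hnocl⟩ := cliBranch_sound G τ γ k (k + 1) ∅ _ (𝓑.equivFin.symm i).2
    apply omega_le_of_no_clique
    intro K hK hcl
    apply hnocl
    refine ⟨K, Finset.disjoint_left.mpr fun {x} hx hxU => ?_, hcl⟩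
    exact (hK (Finset.mem_coe.mpr hx)) (Finset.mem_coe.mpr hxU)
  · -- size bound
    intro i
    obtain ⟨hcard, _⟩ := cliBranch_sound G τ γ k (k + 1) ∅ _ (𝓑.equivFin.symm i).2
    rw [hSs]
    simpa [Set.ncard_coe_finset] using hcard
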